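/- arXiv:1403.1172 — 5 statements merged into one kernel-verified Lean document; each statement's English description precedes it below -/
import Mathlib

section
/- Let A be a degree matrix in Z^{t×(t+c-1)} with a_{k,l} = 0 for some k, l (necessarily k > l). Then hp^A(z) = hp^{A^{(k,l)}}(z), where A^{(k,l)} is A with row k and column l deleted. -/
open Polynomial

/-- The polynomial `1 + z + ⋯ + z^(d-1)`. -/
noncomputable def geom (d : ℤ) : Polynomial ℤ :=
  ∑ i ∈ Finset.range d.toNat, Polynomial.X ^ i

/-- The h-polynomial of a standard determinantal ideal with `t × m` degree matrix `A`
(codimension `m - t + 1`), defined via the basic-double-link recursion applied at the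
bottom-right entry, with the conventions `hp = 0` for `t = 0` and `hp = 1` for `m < t`. -/
noncomputable def hp : (t m : ℕ) → Matrix (Fin t) (Fin m) ℤ → Polynomial ℤ
  | 0, _, _ => 0
  | _ + 1, 0, _ => 1
  | t + 1, m + 1, A =>
    if m + 1 ≤ t then 1
    else
      Polynomial.X ^ (A (Fin.last t) (Fin.last m)).toNat *
          hp t m (fun i j => A i.castSucc j.castSucc) +
        geom (A (Fin.last t) (Fin.last m)) * hp (t + 1) m (fun i j => A i j.castSucc)
  termination_by t m => (t, m)

/-- Delete row `k` and column `l` of a matrix. -/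
def delRC {t m : ℕ} (A : Matrix (Fin (t + 1)) (Fin (m + 1)) ℤ)
    (k : Fin (t + 1)) (l : Fin (m + 1)) : Matrix (Fin t) (Fin m) ℤ :=
  fun i j => A (k.succAbove i) (l.succAbove j)

/-- Delete column `l` of a matrix. -/
def delC {t m : ℕ} (A : Matrix (Fin t) (Fin (m + 1)) ℤ) (l : Fin (m + 1)) :
    Matrix (Fin t) (Fin m) ℤ :=
  fun i j => A i (l.succAbove j)

/-- `A` is a degree matrix: homogeneous (`a_{i,j} = b_j - a_i`), entries weakly increasing
left-to-right and bottom-to-top, and positive on the main diagonal. -/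
def IsDegreeMatrix {a b : ℕ} (A : Matrix (Fin a) (Fin b) ℤ) : Prop :=
  (∃ (α : Fin a → ℤ) (β : Fin b → ℤ), ∀ i j, A i j = β j - α i) ∧
    (∀ (i : Fin a) (j j' : Fin b), j ≤ j' → A i j ≤ A i j') ∧
    (∀ (i i' : Fin a) (j : Fin b), i ≤ i' → A i' j ≤ A i j) ∧
    (∀ (i : Fin a) (h : (i : ℕ) < b), 0 < A i ⟨i, h⟩)

/-- Binomial coefficient with integer top argument, with the convention that it vanishes
whenever the top argument is negative or smaller than the bottom one. -/
def ch (a : ℤ) (b : ℕ) : ℤ := if a < 0 then 0 else (a.toNat).choose b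

/-- `h : ℕ → ℤ` is a pure O-sequence: it is the f-vector (counting monomials by degree)
of a nonempty finite order ideal of monomials all of whose maximal elements have the
same degree. -/
def IsPureOSequence (h : ℕ → ℤ) : Prop :=
  ∃ (N : ℕ) (Γ : Finset (Fin N → ℕ)),
    Γ.Nonempty ∧
      (∀ μ ∈ Γ, ∀ ν : Fin N → ℕ, ν ≤ μ → ν ∈ Γ) ∧
      (∃ d : ℕ, ∀ μ ∈ Γ, (∀ ν ∈ Γ, μ ≤ ν → μ = ν) → ∑ j, μ j = d) ∧
      (∀ i : ℕ, ((Γ.filter fun μ => ∑ j, μ j = i).card : ℤ) = h i)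

/- helpers -/

lemma succAbove_val {n : ℕ} (p : Fin (n+1)) (i : Fin n) :
    ((p.succAbove i : Fin (n+1)) : ℕ) = if (i:ℕ) < (p:ℕ) then (i:ℕ) else (i:ℕ)+1 := by
  rw [Fin.succAbove]
  split <;> rename_i h <;> simp [Fin.lt_def] at h
  · rw [if_pos h]; simp
  · rw [if_neg (by omega)]; simp

lemma geom_add (a b : ℤ) (ha : 0 ≤ a) (hb : 0 ≤ b) :
    geom (a + b) = geom a + X ^ a.toNat * geom b := by
  unfold geom
  rw [Int.toNat_add ha hb, Finset.sum_range_add, Finset.mul_sum]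
  congr 1
  refine Finset.sum_congr rfl fun i _ => ?_
  rw [pow_add]

lemma geom_zero : geom 0 = 0 := by simp [geom]

lemma key1 (x y : ℤ) (hx : 0 ≤ x) (hy : 0 ≤ y) :
    geom x + X ^ x.toNat * geom y = geom y + X ^ y.toNat * geom x := by
  rw [← geom_add x y hx hy, ← geom_add y x hy hx, add_comm]

lemma hp_zero (m : ℕ) (A : Matrix (Fin 0) (Fin m) ℤ) : hp 0 m A = 0 := by rw [hp]

lemma hp_wide (t m : ℕ) (h : m ≤ t) (A : Matrix (Fin (t+1)) (Fin m) ℤ) :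
    hp (t+1) m A = 1 := by
  cases m with
  | zero => rw [hp]
  | succ n => rw [hp, if_pos (by omega)]

lemma hp_succ (t m : ℕ) (h : t ≤ m) (A : Matrix (Fin (t+1)) (Fin (m+1)) ℤ) :
    hp (t+1) (m+1) A = X ^ (A (Fin.last t) (Fin.last m)).toNat *
      hp t m (delRC A (Fin.last t) (Fin.last m)) +
      geom (A (Fin.last t) (Fin.last m)) * hp (t+1) m (delC A (Fin.last m)) := by
  rw [hp, if_neg (by omega)]
  have h1 : (fun (i : Fin t) (j : Fin m) => A i.castSucc j.castSucc)
      = delRC A (Fin.last t) (Fin.last m) := by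
    funext i j; simp [delRC, Fin.succAbove_last]
  have h2 : (fun (i : Fin (t+1)) (j : Fin m) => A i j.castSucc) = delC A (Fin.last m) := by
    funext i j; simp [delC, Fin.succAbove_last]
  rw [h1, h2]

lemma isDM_sub {t m t' m' : ℕ} {A : Matrix (Fin t) (Fin m) ℤ} (hA : IsDegreeMatrix A)
    (r : Fin t' → Fin t) (c : Fin m' → Fin m) (hr : Monotone r) (hc : Monotone c)
    (hdiag : ∀ (i : Fin t') (h : (i:ℕ) < m'), (r i : ℕ) ≤ (c ⟨i, h⟩ : ℕ)) :
    IsDegreeMatrix (fun i j => A (r i) (c j)) := by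
  obtain ⟨⟨α, β, hαβ⟩, hcol, hrow, hdg⟩ := hA
  refine ⟨⟨fun i => α (r i), fun j => β (c j), fun i j => hαβ _ _⟩,
    fun i j j' hj => hcol _ _ _ (hc hj),
    fun i i' j hi => hrow _ _ _ (hr hi), fun i h => ?_⟩
  have h1 : ((r i : ℕ)) < m := lt_of_le_of_lt (hdiag i h) (c ⟨i,h⟩).isLt
  calc (0:ℤ) < A (r i) ⟨r i, h1⟩ := hdg _ h1
    _ ≤ A (r i) (c ⟨i, h⟩) := hcol _ _ _ (by rw [Fin.le_def]; exact hdiag i h)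

lemma succAbove_mono {n : ℕ} (p : Fin (n+1)) : Monotone p.succAbove := by
  intro a b h
  rw [Fin.le_def] at h ⊢
  simp only [succAbove_val]
  split_ifs <;> omega

lemma isDM_delC {t m : ℕ} {A : Matrix (Fin t) (Fin (m+1)) ℤ} (hA : IsDegreeMatrix A)
    (l : Fin (m+1)) : IsDegreeMatrix (delC A l) := by
  refine isDM_sub hA id l.succAbove monotone_id (succAbove_mono l) (fun i h => ?_)
  rw [succAbove_val]
  split_ifs <;> simp <;> omega

lemma isDM_delRC_last {t m : ℕ} {A : Matrix (Fin (t+1)) (Fin (m+1)) ℤ}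
    (hA : IsDegreeMatrix A) (l : Fin (m+1)) : IsDegreeMatrix (delRC A (Fin.last t) l) := by
  refine isDM_sub hA (Fin.last t).succAbove l.succAbove (succAbove_mono _)
    (succAbove_mono l) (fun i h => ?_)
  rw [succAbove_val, succAbove_val]
  have hi := i.isLt
  split_ifs <;> simp_all [Fin.val_last] <;> omega

lemma mainL : ∀ (m t : ℕ), t ≤ m → ∀ (A : Matrix (Fin (t+1)) (Fin (m+1)) ℤ),
    IsDegreeMatrix A → ∀ l : Fin (m+1), 0 ≤ A (Fin.last t) l →
    hp (t+1) (m+1) A =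
      X ^ (A (Fin.last t) l).toNat * hp t m (delRC A (Fin.last t) l) +
        geom (A (Fin.last t) l) * hp (t+1) m (delC A l) := by
  intro m
  induction m with
  | zero =>
    intro t ht A hA l _
    obtain rfl : t = 0 := by omega
    have hl : l = Fin.last 0 := Fin.ext (by omega)
    subst hl
    exact hp_succ 0 0 le_rfl A
  | succ n ih =>
    intro t ht A hA l hg0
    by_cases hlast : (l:ℕ) = n + 1
    · have hl : l = Fin.last (n+1) := Fin.ext (by simpa [Fin.val_last] using hlast)
      subst hl
      exact hp_succ t (n+1) ht A
    have hln : (l:ℕ) ≤ n := by have := l.isLt; omega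
    by_cases ht0 : t = 0
    · subst ht0
      have E2 : delC A (Fin.last (n+1)) (Fin.last 0) (⟨(l:ℕ), by omega⟩ : Fin (n+1))
          = A (Fin.last 0) l := by
        simp only [delC]
        exact congrArg₂ A rfl (by
          apply Fin.ext
          simp only [succAbove_val, Fin.val_last]
          split_ifs <;> omega)
      have M4 : delC (delC A (Fin.last (n+1))) (⟨(l:ℕ), by omega⟩ : Fin (n+1))
          = delC (delC A l) (Fin.last n) := by
        funext i j
        simp only [delC]
        exact congrArg₂ A rfl (by
          apply Fin.ext
          have hj := j.isLt
          simp only [succAbove_val, Fin.val_last]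
          split_ifs <;> omega)
      have IH2 := ih 0 (by omega) (delC A (Fin.last (n+1))) (isDM_delC hA _)
        ⟨(l:ℕ), by omega⟩ (by rw [E2]; exact hg0)
      rw [E2, M4] at IH2
      simp only [hp_zero, mul_zero, zero_add] at IH2
      have E4 : delC A l (Fin.last 0) (Fin.last n) = A (Fin.last 0) (Fin.last (n+1)) := by
        simp only [delC]
        exact congrArg₂ A rfl (by
          apply Fin.ext
          simp only [succAbove_val, Fin.val_last]
          split_ifs <;> omega)
      rw [hp_succ 0 (n+1) (by omega) A, IH2, hp_succ 0 n (by omega) (delC A l), E4]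
      simp only [hp_zero, mul_zero, zero_add]
      ring
    · obtain ⟨s, rfl⟩ : ∃ s, t = s + 1 := ⟨t - 1, by omega⟩
      have hsn : s ≤ n := by omega
      -- entry abbreviations and facts
      have hgg' : A (Fin.last (s+1)) l ≤ A (Fin.castSucc (Fin.last s)) l :=
        hA.2.2.1 (Fin.castSucc (Fin.last s)) (Fin.last (s+1)) l
          (by rw [Fin.le_def]; simp [Fin.val_last])
      set e : ℤ := A (Fin.castSucc (Fin.last s)) l - A (Fin.last (s+1)) l with he_def
      have he0 : 0 ≤ e := by rw [he_def]; linarith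
      have hcs : A (Fin.castSucc (Fin.last s)) l = A (Fin.last (s+1)) l + e := by
        rw [he_def]; ring
      have hb' : A (Fin.castSucc (Fin.last s)) (Fin.last (n+1))
          = A (Fin.last (s+1)) (Fin.last (n+1)) + e := by
        obtain ⟨α, β, hh⟩ := hA.1
        have h1 := hh (Fin.last (s+1)) l
        have h2 := hh (Fin.castSucc (Fin.last s)) l
        have h3 := hh (Fin.last (s+1)) (Fin.last (n+1))
        have h4 := hh (Fin.castSucc (Fin.last s)) (Fin.last (n+1))
        rw [he_def]; linarith
      have ha0 : (0:ℤ) ≤ A (Fin.last (s+1)) (Fin.last (n+1)) := by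
        have hd := hA.2.2.2 (Fin.last (s+1)) (by simp [Fin.val_last]; omega)
        have hc := hA.2.1 (Fin.last (s+1)) ⟨(Fin.last (s+1) : ℕ), by simp [Fin.val_last]; omega⟩
          (Fin.last (n+1)) (by rw [Fin.le_def]; simp [Fin.val_last]; omega)
        linarith
      -- entry identities
      have E1 : delRC A (Fin.last (s+1)) (Fin.last (n+1)) (Fin.last s)
          (⟨(l:ℕ), by omega⟩ : Fin (n+1)) = A (Fin.castSucc (Fin.last s)) l := by
        simp only [delRC]
        exact congrArg₂ A
          (by apply Fin.ext; simp only [succAbove_val, Fin.val_last, Fin.coe_castSucc]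
              split_ifs <;> omega)
          (by apply Fin.ext; simp only [succAbove_val, Fin.val_last]
              split_ifs <;> omega)
      have E2 : delC A (Fin.last (n+1)) (Fin.last (s+1)) (⟨(l:ℕ), by omega⟩ : Fin (n+1))
          = A (Fin.last (s+1)) l := by
        simp only [delC]
        exact congrArg₂ A rfl (by
          apply Fin.ext
          simp only [succAbove_val, Fin.val_last]
          split_ifs <;> omega)
      have E3 : delRC A (Fin.last (s+1)) l (Fin.last s) (Fin.last n)
          = A (Fin.castSucc (Fin.last s)) (Fin.last (n+1)) := by
        simp only [delRC]
        exact congrArg₂ A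
          (by apply Fin.ext; simp only [succAbove_val, Fin.val_last, Fin.coe_castSucc]
              split_ifs <;> omega)
          (by apply Fin.ext; simp only [succAbove_val, Fin.val_last]
              split_ifs <;> omega)
      have E4 : delC A l (Fin.last (s+1)) (Fin.last n)
          = A (Fin.last (s+1)) (Fin.last (n+1)) := by
        simp only [delC]
        exact congrArg₂ A rfl (by
          apply Fin.ext
          simp only [succAbove_val, Fin.val_last]
          split_ifs <;> omega)
      -- matrix identities
      have M1 : delRC (delRC A (Fin.last (s+1)) (Fin.last (n+1))) (Fin.last s)
            (⟨(l:ℕ), by omega⟩ : Fin (n+1))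
          = delRC (delRC A (Fin.last (s+1)) l) (Fin.last s) (Fin.last n) := by
        funext i j
        simp only [delRC]
        exact congrArg₂ A rfl (by
          apply Fin.ext
          have hj := j.isLt
          simp only [succAbove_val, Fin.val_last]
          split_ifs <;> omega)
      have M2 : delC (delRC A (Fin.last (s+1)) (Fin.last (n+1)))
            (⟨(l:ℕ), by omega⟩ : Fin (n+1))
          = delC (delRC A (Fin.last (s+1)) l) (Fin.last n) := by
        funext i j
        simp only [delC, delRC]
        exact congrArg₂ A rfl (by
          apply Fin.ext
          have hj := j.isLt
          simp only [succAbove_val, Fin.val_last]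
          split_ifs <;> omega)
      have M3 : delRC (delC A (Fin.last (n+1))) (Fin.last (s+1))
            (⟨(l:ℕ), by omega⟩ : Fin (n+1))
          = delC (delRC A (Fin.last (s+1)) l) (Fin.last n) := by
        funext i j
        simp only [delC, delRC]
        exact congrArg₂ A rfl (by
          apply Fin.ext
          have hj := j.isLt
          simp only [succAbove_val, Fin.val_last]
          split_ifs <;> omega)
      have M4 : delC (delC A (Fin.last (n+1))) (⟨(l:ℕ), by omega⟩ : Fin (n+1))
          = delC (delC A l) (Fin.last n) := by
        funext i j
        simp only [delC]
        exact congrArg₂ A rfl (by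
          apply Fin.ext
          have hj := j.isLt
          simp only [succAbove_val, Fin.val_last]
          split_ifs <;> omega)
      have M5 : delRC (delC A l) (Fin.last (s+1)) (Fin.last n)
          = delC (delRC A (Fin.last (s+1)) l) (Fin.last n) := rfl
      -- main computation
      rw [hp_succ (s+1) (n+1) ht A]
      have IH1 := ih s hsn (delRC A (Fin.last (s+1)) (Fin.last (n+1)))
        (isDM_delRC_last hA _) ⟨(l:ℕ), by omega⟩ (by rw [E1]; linarith)
      rw [E1, hcs, M1, M2] at IH1
      rw [IH1]
      rw [hp_succ s n hsn (delRC A (Fin.last (s+1)) l), E3, hb']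
      by_cases hsq : s + 1 ≤ n
      · have IH2 := ih (s+1) hsq (delC A (Fin.last (n+1))) (isDM_delC hA _)
          ⟨(l:ℕ), by omega⟩ (by rw [E2]; exact hg0)
        rw [E2, M3, M4] at IH2
        rw [IH2]
        rw [hp_succ (s+1) n hsq (delC A l), E4, M5]
        rw [Int.toNat_add hg0 he0, Int.toNat_add ha0 he0, pow_add, pow_add,
            geom_add _ _ hg0 he0, geom_add _ _ ha0 he0]
        ring
      · obtain rfl : s = n := by omega
        rw [hp_wide (s+1) (s+1) le_rfl (delC A (Fin.last (s+1)))]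
        rw [hp_wide (s+1) (s+1) le_rfl (delC A l)]
        rw [hp_wide s s le_rfl (delC (delRC A (Fin.last (s+1)) l) (Fin.last s))]
        rw [Int.toNat_add hg0 he0, Int.toNat_add ha0 he0, pow_add, pow_add,
            geom_add _ _ hg0 he0, geom_add _ _ ha0 he0]
        linear_combination key1 (A (Fin.last (s+1)) (Fin.last (s+1))) (A (Fin.last (s+1)) l) ha0 hg0

lemma entry_pos {t m : ℕ} {A : Matrix (Fin (t+1)) (Fin (m+1)) ℤ} (hA : IsDegreeMatrix A)
    (ht : t ≤ m) (k : Fin (t+1)) (l : Fin (m+1)) (h : (k:ℕ) ≤ (l:ℕ)) : 0 < A k l := by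
  have h1 : (k:ℕ) < m+1 := by omega
  have h2 := hA.2.2.2 k h1
  have h3 := hA.2.1 k ⟨(k:ℕ), h1⟩ l (by rw [Fin.le_def]; exact h)
  linarith

lemma S1 : ∀ (m t : ℕ), t ≤ m → ∀ (A : Matrix (Fin (t+1)) (Fin (m+1)) ℤ), IsDegreeMatrix A →
    ∀ (k : Fin (t+1)) (l : Fin (m+1)), A k l = 0 → hp (t+1) (m+1) A = hp t m (delRC A k l) := by
  intro m
  induction m with
  | zero =>
    intro t ht A hA k l hkl
    have := entry_pos hA ht k l (by omega)
    omega
  | succ n ih =>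
    intro t ht A hA k l hkl
    have hlk : (l:ℕ) < (k:ℕ) := by
      by_contra h
      have := entry_pos hA ht k l (by omega)
      omega
    by_cases hk : (k:ℕ) = t
    · have hk' : k = Fin.last t := Fin.ext (by simp [Fin.val_last]; omega)
      subst hk'
      have hm := mainL (n+1) t ht A hA l (le_of_eq hkl.symm)
      rw [hm, hkl]
      simp [geom_zero]
    · obtain ⟨s, rfl⟩ : ∃ s, t = s + 1 := ⟨t - 1, by omega⟩
      have hsn : s ≤ n := by omega
      have hks : (k:ℕ) < s+1 := by omega
      have hln2 : (l:ℕ) < n+1 := by omega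
      rw [hp_succ (s+1) (n+1) ht A]
      rw [hp_succ s n hsn (delRC A k l)]
      have Ed : delRC A k l (Fin.last s) (Fin.last n)
          = A (Fin.last (s+1)) (Fin.last (n+1)) := by
        simp only [delRC]
        exact congrArg₂ A
          (Fin.ext (by simp only [succAbove_val, Fin.val_last]; split_ifs <;> omega))
          (Fin.ext (by simp only [succAbove_val, Fin.val_last]; split_ifs <;> omega))
      rw [Ed]
      have E1 : delRC A (Fin.last (s+1)) (Fin.last (n+1)) (⟨(k:ℕ), hks⟩ : Fin (s+1))
          (⟨(l:ℕ), hln2⟩ : Fin (n+1)) = A k l := by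
        simp only [delRC]
        exact congrArg₂ A
          (Fin.ext (by simp only [succAbove_val, Fin.val_last]; split_ifs <;> omega))
          (Fin.ext (by simp only [succAbove_val, Fin.val_last]; split_ifs <;> omega))
      have C1 := ih s hsn (delRC A (Fin.last (s+1)) (Fin.last (n+1))) (isDM_delRC_last hA _)
        ⟨(k:ℕ), hks⟩ ⟨(l:ℕ), hln2⟩ (by rw [E1]; exact hkl)
      have M1 : delRC (delRC A (Fin.last (s+1)) (Fin.last (n+1)))
            (⟨(k:ℕ), hks⟩ : Fin (s+1)) (⟨(l:ℕ), hln2⟩ : Fin (n+1))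
          = delRC (delRC A k l) (Fin.last s) (Fin.last n) := by
        funext i j
        simp only [delRC]
        exact congrArg₂ A
          (Fin.ext (by have hi := i.isLt
                       simp only [succAbove_val, Fin.val_last]; split_ifs <;> omega))
          (Fin.ext (by have hj := j.isLt
                       simp only [succAbove_val, Fin.val_last]; split_ifs <;> omega))
      rw [M1] at C1
      rw [C1]
      by_cases hsq : s + 1 ≤ n
      · have E2 : delC A (Fin.last (n+1)) k (⟨(l:ℕ), hln2⟩ : Fin (n+1)) = A k l := by
          simp only [delC]
          exact congrArg₂ A rfl
            (Fin.ext (by simp only [succAbove_val, Fin.val_last]; split_ifs <;> omega))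
        have C2 := ih (s+1) hsq (delC A (Fin.last (n+1))) (isDM_delC hA _) k
          (⟨(l:ℕ), hln2⟩ : Fin (n+1)) (by rw [E2]; exact hkl)
        have M2 : delRC (delC A (Fin.last (n+1))) k (⟨(l:ℕ), hln2⟩ : Fin (n+1))
            = delC (delRC A k l) (Fin.last n) := by
          funext i j
          simp only [delC, delRC]
          exact congrArg₂ A rfl
            (Fin.ext (by have hj := j.isLt
                         simp only [succAbove_val, Fin.val_last]; split_ifs <;> omega))
        rw [M2] at C2
        rw [C2]
      · obtain rfl : s = n := by omega
        rw [hp_wide (s+1) (s+1) le_rfl (delC A (Fin.last (s+1)))]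
        rw [hp_wide s s le_rfl (delC (delRC A k l) (Fin.last s))]


/-- If an entry `a_{k,l}` of a degree matrix `A` is zero, then the h-polynomial of `A`
equals the h-polynomial of the matrix obtained from `A` by deleting row `k` and column `l`. -/
theorem hp_of_entry_eq_zero (t c : ℕ) (A : Matrix (Fin (t + 1)) (Fin (t + c + 1)) ℤ)
    (hA : IsDegreeMatrix A) (k : Fin (t + 1)) (l : Fin (t + c + 1))
    (hkl : A k l = 0) :
    hp (t + 1) (t + c + 1) A = hp t (t + c) (delRC A k l) :=
  S1 (t + c) t (by omega) A hA k l hkl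
end

section
/- Let A ∈ Z^{t×(t+c-1)} be a degree matrix. The degree of the h-polynomial hp^A equals a_{1,1} + ... + a_{1,c} + a_{2,c+1} + ... + a_{t,t+c-1} - c (the sum of the entries in the first row up to column c plus the entries a_{i,c+i-1} for i = 2,...,t, minus c). -/
open Polynomial

/-!
Write `a_{i,j} = β_j - α_i` and expand `hp` at the bottom-right entry `a = β_m - α_t > 0`:
`hp^A = z^a hp^{A'} + (1 + ⋯ + z^(a-1)) hp^{A''}`, where `A'` drops the last row and column and
`A''` the last column. Every `hp` has nonnegative coefficients, so nothing cancels and the degree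
is the larger of `a + deg hp^{A'}` and `a - 1 + deg hp^{A''}` (only the second term survives for
a single row). By induction both are given by the claimed formula, and telescoping along the
diagonal shows that the first exceeds the second by `α_t - α_0 ≥ 0`.
-/

open Finset

namespace Polynomial

variable {R : Type*} [Semiring R] [PartialOrder R] {p q : R[X]}

theorem le_natDegree_add_of_coeff_nonneg [IsOrderedCancelAddMonoid R]
    (hp : ∀ n, 0 ≤ p.coeff n) (hq : ∀ n, 0 ≤ q.coeff n) :
    p.natDegree ≤ (p + q).natDegree := by
  rcases eq_or_ne p 0 with rfl | hp0
  · simp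
  refine le_natDegree_of_ne_zero (ne_of_gt ?_)
  rw [coeff_add]
  exact add_pos_of_pos_of_nonneg ((hp _).lt_of_ne (leadingCoeff_ne_zero.2 hp0).symm) (hq _)

theorem natDegree_add_of_coeff_nonneg [IsOrderedCancelAddMonoid R]
    (hp : ∀ n, 0 ≤ p.coeff n) (hq : ∀ n, 0 ≤ q.coeff n) :
    (p + q).natDegree = max p.natDegree q.natDegree :=
  (natDegree_add_le p q).antisymm <| max_le (le_natDegree_add_of_coeff_nonneg hp hq)
    (add_comm p q ▸ le_natDegree_add_of_coeff_nonneg hq hp)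

theorem add_ne_zero_of_coeff_nonneg [IsOrderedAddMonoid R]
    (hp : ∀ n, 0 ≤ p.coeff n) (hq : ∀ n, 0 ≤ q.coeff n) (hq0 : q ≠ 0) : p + q ≠ 0 := by
  refine fun h => hq0 (ext fun n => ?_)
  have hn : p.coeff n + q.coeff n = 0 := by rw [← coeff_add, h, coeff_zero]
  exact ((add_eq_zero_iff_of_nonneg (hp n) (hq n)).1 hn).2

theorem coeff_mul_nonneg [IsOrderedRing R] (hp : ∀ n, 0 ≤ p.coeff n)
    (hq : ∀ n, 0 ≤ q.coeff n) (n : ℕ) : 0 ≤ (p * q).coeff n := by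
  rw [coeff_mul]
  exact sum_nonneg fun x _ => mul_nonneg (hp _) (hq _)

theorem coeff_X_pow_nonneg [IsOrderedRing R] (k n : ℕ) : 0 ≤ ((X : R[X]) ^ k).coeff n := by
  rw [coeff_X_pow]
  split_ifs <;> simp

end Polynomial

theorem coeff_geom (d : ℤ) (k : ℕ) : (geom d).coeff k = if k < d.toNat then 1 else 0 := by
  simp [geom, coeff_X_pow]

theorem coeff_geom_nonneg (d : ℤ) (k : ℕ) : 0 ≤ (geom d).coeff k := by
  rw [coeff_geom]; split_ifs <;> norm_num

theorem natDegree_geom {d : ℤ} (hd : 0 < d) : (geom d).natDegree = d.toNat - 1 :=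
  natDegree_eq_of_le_of_coeff_ne_zero
    (natDegree_le_iff_coeff_eq_zero.2 fun k hk => by rw [coeff_geom, if_neg (by omega)])
    (by rw [coeff_geom, if_pos (by omega)]; norm_num)

theorem geom_ne_zero {d : ℤ} (hd : 0 < d) : geom d ≠ 0 := by
  intro h
  have h0 := coeff_geom d 0
  rw [h, if_pos (by omega)] at h0
  exact zero_ne_one h0

theorem coeff_hp_nonneg (t m : ℕ) (A : Matrix (Fin t) (Fin m) ℤ) (n : ℕ) :
    0 ≤ (hp t m A).coeff n := by
  induction t, m, A using hp.induct generalizing n with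
  | case1 m A => rw [hp.eq_1, coeff_zero]
  | case2 t A => rw [hp.eq_2, coeff_one]; split_ifs <;> norm_num
  | case3 t m h A => rw [hp.eq_3, if_pos h, coeff_one]; split_ifs <;> norm_num
  | case4 t m h A ih₁ ih₂ =>
    rw [hp.eq_3, if_neg h, coeff_add]
    exact add_nonneg (coeff_mul_nonneg (coeff_X_pow_nonneg _) ih₁ n)
      (coeff_mul_nonneg (coeff_geom_nonneg _) ih₂ n)

theorem hp_eq_one_of_le {t m : ℕ} (h : m ≤ t) (A : Matrix (Fin (t + 1)) (Fin m) ℤ) :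
    hp (t + 1) m A = 1 := by
  cases m with
  | zero => exact hp.eq_2 _ _
  | succ m => rw [hp.eq_3, if_pos h]

/-- Indexing the degrees by `ℕ` makes every top-left corner of `degreeMatrix α β t m` again a
`degreeMatrix α β t' m'`, definitionally, so the recursion of `hp` never needs to cast indices. -/
def degreeMatrix (α β : ℕ → ℤ) (t m : ℕ) : Matrix (Fin t) (Fin m) ℤ :=
  Matrix.of fun i j => β j - α i

theorem hp_degreeMatrix_succ_succ (α β : ℕ → ℤ) {t m : ℕ} (h : t ≤ m) :
    hp (t + 1) (m + 1) (degreeMatrix α β (t + 1) (m + 1)) =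
      X ^ (β m - α t).toNat * hp t m (degreeMatrix α β t m) +
        geom (β m - α t) * hp (t + 1) m (degreeMatrix α β (t + 1) m) := by
  rw [hp.eq_3, if_neg (by omega)]
  rfl

def hpDegreeFormula (α β : ℕ → ℤ) (t c : ℕ) : ℤ :=
  ∑ j ∈ range (c + 1), (β j - α 0) + ∑ i ∈ range t, (β (c + i + 1) - α (i + 1)) -
    (c + 1)

theorem hpDegreeFormula_zero_succ (α β : ℕ → ℤ) (c : ℕ) :
    hpDegreeFormula α β 0 (c + 1) = hpDegreeFormula α β 0 c + (β (c + 1) - α 0) - 1 := by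
  simp only [hpDegreeFormula, sum_range_succ _ (c + 1), range_zero, sum_empty]
  push_cast
  ring

theorem hpDegreeFormula_succ (α β : ℕ → ℤ) (t c : ℕ) :
    hpDegreeFormula α β (t + 1) c =
      hpDegreeFormula α β t c + (β (t + 1 + c) - α (t + 1)) := by
  simp only [hpDegreeFormula, sum_range_succ _ t]
  rw [show c + t + 1 = t + 1 + c by omega]
  ring

theorem hpDegreeFormula_succ_le (α β : ℕ → ℤ) {t : ℕ} (hα : α 0 ≤ α (t + 1)) (c : ℕ) :
    hpDegreeFormula α β (t + 1) c ≤ hpDegreeFormula α β t (c + 1) + 1 := by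
  have telescope : ∑ i ∈ range t, (β (c + 1 + i + 1) - α (i + 1)) =
      ∑ i ∈ range t, (β (c + i + 1) - α (i + 1)) + (β (c + t + 1) - β (c + 1)) := by
    rw [← sum_range_sub (fun i => β (c + i + 1)), ← sum_add_distrib]
    refine sum_congr rfl fun i _ => ?_
    rw [show c + (i + 1) + 1 = c + 1 + i + 1 by omega, show c + 0 + 1 = c + 1 by omega]
    ring
  simp only [hpDegreeFormula, sum_range_succ _ t, sum_range_succ _ (c + 1), telescope]
  push_cast
  linarith

theorem X_pow_mul_add_geom_mul_ne_zero_and_natDegree_eq {a : ℤ} (ha : 0 < a) {p q : ℤ[X]}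
    (hp : ∀ n, 0 ≤ p.coeff n) (hq : ∀ n, 0 ≤ q.coeff n) (hp0 : p ≠ 0) (hq0 : q ≠ 0)
    (hdeg : (q.natDegree : ℤ) ≤ p.natDegree + 1) :
    X ^ a.toNat * p + geom a * q ≠ 0 ∧
      ((X ^ a.toNat * p + geom a * q).natDegree : ℤ) = p.natDegree + a := by
  have hXp := coeff_mul_nonneg (coeff_X_pow_nonneg a.toNat) hp
  have hgq := coeff_mul_nonneg (coeff_geom_nonneg a) hq
  refine ⟨add_ne_zero_of_coeff_nonneg hXp hgq (mul_ne_zero (geom_ne_zero ha) hq0), ?_⟩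
  rw [natDegree_add_of_coeff_nonneg hXp hgq, natDegree_mul (pow_ne_zero _ X_ne_zero) hp0,
    natDegree_mul (geom_ne_zero ha) hq0, natDegree_X_pow, natDegree_geom ha]
  omega

theorem hp_degreeMatrix_ne_zero_and_natDegree_eq {α β : ℕ → ℤ} (hα : Monotone α)
    (hαβ : ∀ i j, i ≤ j → α i < β j) {t m : ℕ} (htm : t ≤ m) :
    hp (t + 1) (m + 1) (degreeMatrix α β (t + 1) (m + 1)) ≠ 0 ∧
      ((hp (t + 1) (m + 1) (degreeMatrix α β (t + 1) (m + 1))).natDegree : ℤ) =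
        hpDegreeFormula α β t (m - t) := by
  induction m generalizing t with
  | zero =>
    obtain rfl : t = 0 := by omega
    have ha := sub_pos.2 (hαβ 0 0 le_rfl)
    rw [hp_degreeMatrix_succ_succ α β le_rfl, hp.eq_1, hp_eq_one_of_le le_rfl, mul_zero,
      zero_add, mul_one, natDegree_geom ha]
    refine ⟨geom_ne_zero ha, ?_⟩
    have hF : hpDegreeFormula α β 0 0 = β 0 - α 0 - 1 := by simp [hpDegreeFormula]
    rw [Nat.sub_self, hF]
    omega
  | succ m ih =>
    have ha := sub_pos.2 (hαβ t (m + 1) htm)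
    rw [hp_degreeMatrix_succ_succ α β htm]
    rcases t with _ | t
    · obtain ⟨hq0, hq⟩ := ih (t := 0) (Nat.zero_le m)
      rw [hp.eq_1, mul_zero, zero_add, natDegree_mul (geom_ne_zero ha) hq0, natDegree_geom ha]
      simp only [Nat.sub_zero] at hq ⊢
      refine ⟨mul_ne_zero (geom_ne_zero ha) hq0, ?_⟩
      rw [hpDegreeFormula_zero_succ]
      omega
    obtain ⟨hp0, hpdeg⟩ := ih (t := t) (by omega)
    obtain ⟨hq0, hqdeg⟩ : hp (t + 2) (m + 1) (degreeMatrix α β (t + 2) (m + 1)) ≠ 0 ∧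
        ((hp (t + 2) (m + 1) (degreeMatrix α β (t + 2) (m + 1))).natDegree : ℤ) ≤
          (hp (t + 1) (m + 1) (degreeMatrix α β (t + 1) (m + 1))).natDegree + 1 := by
      rcases (by omega : t = m ∨ t < m) with rfl | htm'
      · rw [hp_eq_one_of_le le_rfl]
        exact ⟨one_ne_zero, by rw [natDegree_one]; omega⟩
      obtain ⟨hq0, hq⟩ := ih (t := t + 1) (by omega)
      refine ⟨hq0, ?_⟩
      have hle := hpDegreeFormula_succ_le α β (hα (Nat.zero_le (t + 1))) (m - (t + 1))
      rwa [show m - (t + 1) + 1 = m - t by omega, ← hq, ← hpdeg] at hle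
    rw [Nat.add_sub_add_right, hpDegreeFormula_succ, show t + 1 + (m - t) = m + 1 by omega,
      ← hpdeg]
    exact X_pow_mul_add_geom_mul_ne_zero_and_natDegree_eq ha (coeff_hp_nonneg _ _ _)
      (coeff_hp_nonneg _ _ _) hp0 hq0 hqdeg

theorem IsDegreeMatrix.exists_eq_degreeMatrix {t m : ℕ}
    {A : Matrix (Fin (t + 1)) (Fin (m + 1)) ℤ} (hA : IsDegreeMatrix A) (htm : t ≤ m) :
    ∃ α β : ℕ → ℤ, Monotone α ∧ (∀ i j, i ≤ j → α i < β j) ∧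
      A = degreeMatrix α β (t + 1) (m + 1) := by
  obtain ⟨⟨α, β, hab⟩, hrow, hcol, hdiag⟩ := hA
  have hα : Monotone α := fun i i' h => by
    have := hcol i i' 0 h
    rw [hab, hab] at this
    linarith
  have hβ : Monotone β := fun j j' h => by
    have := hrow 0 j j' h
    rw [hab, hab] at this
    linarith
  refine ⟨fun i => α (Fin.clamp i t), fun j => β (Fin.clamp j m), fun i i' h => hα ?_,
    fun i j h => ?_, ?_⟩
  · simp only [Fin.clamp, Fin.mk_le_mk]
    omega
  · have hi := hdiag (Fin.clamp i t) (by simp only [Fin.clamp]; omega)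
    rw [hab] at hi
    refine (sub_pos.1 hi).trans_le (hβ ?_)
    simp only [Fin.clamp, Fin.mk_le_mk]
    omega
  · ext i j
    simp [degreeMatrix, hab, Fin.clamp, Nat.lt_succ_iff.1 i.2, Nat.lt_succ_iff.1 j.2]

/-- The degree of the h-polynomial of a degree matrix `A ∈ ℤ^{(t+1)×(t+c+1)}` (codimension
`c+1`) equals `a_{1,1} + ⋯ + a_{1,c+1} + a_{2,c+2} + ⋯ + a_{t+1,t+c+1} - (c+1)`. -/
theorem hp_natDegree (t c : ℕ) (A : Matrix (Fin (t + 1)) (Fin (t + c + 1)) ℤ)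
    (hA : IsDegreeMatrix A) :
    ((hp (t + 1) (t + c + 1) A).natDegree : ℤ) =
      (∑ j : Fin (c + 1), A 0 (Fin.castLE (by omega) j)) +
        (∑ i : Fin t, A ⟨i.val + 1, by omega⟩ ⟨c + i.val + 1, by omega⟩) - (c + 1) := by
  obtain ⟨α, β, hα, hαβ, rfl⟩ := hA.exists_eq_degreeMatrix (Nat.le_add_right t c)
  rw [(hp_degreeMatrix_ne_zero_and_natDegree_eq hα hαβ (Nat.le_add_right t c)).2,
    Nat.add_sub_cancel_left, hpDegreeFormula, ← Fin.sum_univ_eq_sum_range,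
    ← Fin.sum_univ_eq_sum_range]
  rfl
end

section
/- Let a_1, a_2, ..., a_c ≥ 1 and let h = (h_0, ..., h_s) be the coefficient sequence of ∏_{i=1}^c (1+z+...+z^{a_i-1}) (the h-vector of a complete intersection of type (a_1,...,a_c)). Then for all 0 ≤ i ≤ a_2 - 1 (assuming a_1 ≤ a_2 ≤ ... ≤ a_c): h_{s-i} = binom(c-1+i, c-1) - binom(c-1+i-a_1, c-1), with the convention that out-of-range binomial coefficients are 0. -/
open Polynomial

/-!
Each factor `1 + z + ⋯ + z^(a-1)` is palindromic, hence so is the product, and `h_{s-i} = h_i`.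
Multiplying the product by `(1 - z)^(c+2)` gives `∏ (1 - z^{a_j})`, which is congruent to
`1 - z^{a_1}` modulo `z^{i+1}` as soon as `i < a_j` for `j ≥ 2`. Dividing by `(1 - z)^(c+2)` in
power series, `h_i` is the coefficient of `z^i` in `(1 - z^{a_1}) / (1 - z)^(c+2)`, that is
`binom(c+1+i, c+1) - binom(c+1+i-a_1, c+1)`.
-/

open Finset
open scoped PowerSeries

theorem Finset.dvd_prod_sub_one {R ι : Type*} [CommRing R] {x : R} (s : Finset ι) (f : ι → R)
    (h : ∀ j ∈ s, x ∣ f j - 1) : x ∣ ∏ j ∈ s, f j - 1 := by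
  classical
  induction s using Finset.induction_on with
  | empty => simp
  | insert a s ha ih =>
    rw [prod_insert ha,
      show f a * ∏ j ∈ s, f j - 1 = (f a - 1) * ∏ j ∈ s, f j + (∏ j ∈ s, f j - 1) by ring]
    exact dvd_add ((h a (mem_insert_self a s)).mul_right _)
      (ih fun j hj => h j (mem_insert_of_mem hj))

namespace PowerSeries

variable {R : Type*} [CommRing R]

theorem coeff_geom_sum_mul_prod_geom_sum {n : ℕ} (b₀ : ℕ) (b : Fin n → ℕ) {i : ℕ}
    (hi : ∀ j, i < b j) :
    coeff i ((∑ k ∈ range b₀, X ^ k) * ∏ j, ∑ k ∈ range (b j), (X : R⟦X⟧) ^ k) =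
      (n + i).choose n - if b₀ ≤ i then ((n + (i - b₀)).choose n : R) else 0 := by
  set P := (∑ k ∈ range b₀, X ^ k) * ∏ j, ∑ k ∈ range (b j), (X : R⟦X⟧) ^ k
  have hP : P * (1 - X) ^ (n + 1) = (1 - X ^ b₀) * ∏ j, (1 - X ^ b j) := by
    rw [pow_succ', mul_mul_mul_comm, geom_sum_mul_neg, ← Fin.prod_const n (1 - X),
      ← prod_mul_distrib]
    simp_rw [geom_sum_mul_neg]
  obtain ⟨r, hr⟩ : X ^ (i + 1) ∣ ∏ j, (1 - X ^ b j : R⟦X⟧) - 1 :=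
    dvd_prod_sub_one _ _ fun j _ => by simpa using pow_dvd_pow (X : R⟦X⟧) (hi j)
  have hP' : P = ((1 - X ^ b₀) + X ^ (i + 1) * ((1 - X ^ b₀) * r)) *
      mk fun k => ((n + k).choose n : R) := by
    calc P = P * ((1 - X) ^ (n + 1) * mk fun k => ((n + k).choose n : R)) := by
          rw [mul_comm ((1 - X) ^ (n + 1)), mk_add_choose_mul_one_sub_pow_eq_one, mul_one]
      _ = _ := by rw [← mul_assoc, hP, eq_add_of_sub_eq' hr]; ring
  rw [hP', add_mul, map_add, mul_assoc, coeff_X_pow_mul', if_neg (by omega), add_zero, sub_mul,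
    one_mul, map_sub, coeff_X_pow_mul']
  simp only [coeff_mk]

end PowerSeries

namespace Polynomial

variable {R : Type*}

theorem reverse_prod [CommSemiring R] [NoZeroDivisors R] {ι : Type*} (s : Finset ι)
    (f : ι → R[X]) : (∏ j ∈ s, f j).reverse = ∏ j ∈ s, (f j).reverse := by
  classical
  induction s using Finset.induction_on with
  | empty => simpa using reverse_C (1 : R)
  | insert a s ha ih => rw [prod_insert ha, prod_insert ha, reverse_mul_of_domain, ih]

theorem coeff_natDegree_sub_of_reverse_eq [Semiring R] {p : R[X]} (hp : p.reverse = p) {i : ℕ}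
    (hi : i ≤ p.natDegree) : p.coeff (p.natDegree - i) = p.coeff i := by
  rw [← revAt_le hi, ← coeff_reverse, hp]

section Semiring

variable [Semiring R]

theorem coeff_geom_sum_X (d n : ℕ) :
    (∑ k ∈ range d, (X : R[X]) ^ k).coeff n = if n < d then 1 else 0 := by
  simp [coeff_X_pow]

theorem natDegree_geom_sum_X [Nontrivial R] (d : ℕ) :
    (∑ k ∈ range d, (X : R[X]) ^ k).natDegree = d - 1 := by
  rcases Nat.eq_zero_or_pos d with rfl | hd
  · simp
  refine natDegree_eq_of_le_of_coeff_ne_zero ?_ (by simp [hd])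
  exact natDegree_sum_le_of_forall_le _ _ fun k hk => by
    simpa using Nat.le_sub_one_of_lt (mem_range.mp hk)

theorem reverse_geom_sum_X (d : ℕ) :
    (∑ k ∈ range d, (X : R[X]) ^ k).reverse = ∑ k ∈ range d, X ^ k := by
  nontriviality R
  ext n
  rw [coeff_reverse, natDegree_geom_sum_X, coeff_geom_sum_X, coeff_geom_sum_X]
  rcases le_or_gt n (d - 1) with hn | hn
  · rw [revAt_le hn]
    exact if_congr (by omega) rfl rfl
  · rw [revAt_eq_self_of_lt hn]

end Semiring

theorem natDegree_prod_geom_sum_X [CommSemiring R] [Nontrivial R] {ι : Type*} (s : Finset ι)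
    (d : ι → ℕ) (hd : ∀ j ∈ s, d j ≠ 0) :
    (∏ j ∈ s, ∑ k ∈ range (d j), (X : R[X]) ^ k).natDegree = ∑ j ∈ s, (d j - 1) := by
  rw [natDegree_prod_of_monic _ _ fun j hj => monic_geom_sum_X (hd j hj)]
  simp_rw [natDegree_geom_sum_X]

theorem coeff_geom_sum_mul_prod_geom_sum [CommRing R] {n : ℕ} (b₀ : ℕ) (b : Fin n → ℕ) {i : ℕ}
    (hi : ∀ j, i < b j) :
    ((∑ k ∈ range b₀, X ^ k) * ∏ j, ∑ k ∈ range (b j), (X : R[X]) ^ k).coeff i =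
      (n + i).choose n - if b₀ ≤ i then ((n + (i - b₀)).choose n : R) else 0 := by
  rw [← coeff_coe, ← PowerSeries.coeff_geom_sum_mul_prod_geom_sum b₀ b hi,
    ← coeToPowerSeries.ringHom_apply, map_mul, map_prod]
  simp only [map_sum, map_pow, coeToPowerSeries.ringHom_apply, coe_X]

end Polynomial

theorem geom_natCast (d : ℕ) : geom d = ∑ k ∈ range d, X ^ k := by
  simp [geom]

theorem ch_natCast (m k : ℕ) : ch m k = m.choose k := by
  simp [ch]

theorem ch_add_sub (n i b : ℕ) :
    ch ((n : ℤ) + 1 + i - b) (n + 1) =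
      if b ≤ i then ((n + 1 + (i - b)).choose (n + 1) : ℤ) else 0 := by
  unfold ch
  split_ifs
  · omega
  · rfl
  · rw [show ((n : ℤ) + 1 + i - b).toNat = n + 1 + (i - b) by omega]
  · rw [Nat.choose_eq_zero_of_lt (by omega), Nat.cast_zero]

/-- Last entries of the h-vector of a complete intersection of type `(a_1,…,a_{c+2})` with
`1 ≤ a_1 ≤ ⋯ ≤ a_{c+2}`: for `0 ≤ i ≤ a_2 - 1`, the coefficient of `z^{s-i}` in
`∏ (1 + z + ⋯ + z^{a_j - 1})` equals `binom(c+1+i, c+1) - binom(c+1+i-a_1, c+1)`. -/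
theorem ci_last_entries (c : ℕ) (a : Fin (c + 2) → ℤ) (ha : ∀ j, 1 ≤ a j)
    (hmono : Monotone a) (i : ℕ) (hi : (i : ℤ) ≤ a 1 - 1) :
    (∏ j, geom (a j)).coeff ((∏ j, geom (a j)).natDegree - i) =
      ch ((c : ℤ) + 1 + i) (c + 1) - ch ((c : ℤ) + 1 + i - a 0) (c + 1) := by
  lift a to Fin (c + 2) → ℕ using fun j => by linarith [ha j]
  simp only [geom_natCast, Nat.one_le_cast] at ha hi ⊢
  set P := ∏ j, ∑ k ∈ range (a j), (X : ℤ[X]) ^ k with hP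
  have hP_palindromic : P.reverse = P := by simp_rw [P, reverse_prod, reverse_geom_sum_X]
  have hi_le : i ≤ P.natDegree := by
    rw [natDegree_prod_geom_sum_X _ _ fun j _ => Nat.one_le_iff_ne_zero.mp (ha j)]
    calc i ≤ a 1 - 1 := by omega
      _ ≤ ∑ j, (a j - 1) := single_le_sum (f := fun j => a j - 1) (by simp) (mem_univ 1)
  have hi_lt : ∀ j : Fin (c + 1), i < a j.succ := fun j => by
    have := hmono (show (1 : Fin (c + 2)) ≤ j.succ from Fin.succ_le_succ_iff.mpr (Fin.zero_le j))
    dsimp only at this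
    omega
  rw [coeff_natDegree_sub_of_reverse_eq hP_palindromic hi_le, hP, Fin.prod_univ_succ,
    coeff_geom_sum_mul_prod_geom_sum _ _ hi_lt, ch_add_sub,
    show (c : ℤ) + 1 + i = (c + 1 + i : ℕ) by push_cast; ring, ch_natCast]
end

section
/- The sequence h = (1, 3, 6, 10, 9, 7, 3, 1) is not a pure O-sequence, and h fails Hibi's inequalities (there is an i ≤ s/2 with h_i > h_{s-i}, e.g. h_3 = 10 > 7 = h_{s-3}). The sequence h' = (1, 3, 6, 4, 1) satisfies Hibi's inequalities (h'_i ≤ h'_{s-i} for i ≤ s/2) but is also not a pure O-sequence. -/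
open Finset

theorem Finset.card_piAntidiag_nat_eq_multichoose {ι : Type*} [DecidableEq ι] (s : Finset ι)
    (n : ℕ) : #(s.piAntidiag n) = (#s).multichoose n := by
  rw [← card_finsuppAntidiag_nat_eq_multichoose, finsuppAntidiag, card_map, card_attach]

theorem Pi.single_left_injective {ι M : Type*} [DecidableEq ι] [Zero M] {b : M} (hb : b ≠ 0) :
    Function.Injective fun j : ι => (Pi.single j b : ι → M) := fun i j hij => by
  simpa [Pi.single_apply, eq_comm, hb] using congrFun hij j

theorem Pi.single_le_of_le_apply {ι M : Type*} [DecidableEq ι] [AddCommMonoid M] [PartialOrder M]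
    [CanonicallyOrderedAdd M] {μ : ι → M} {j : ι} {b : M} (hb : b ≤ μ j) :
    Pi.single j b ≤ μ := fun i => by
  rcases eq_or_ne i j with rfl | hij <;> simp [*]

namespace MonomialOrderIdeal

section Pure

variable {ι : Type*} [Fintype ι] {Γ : Finset (ι → ℕ)}

theorem exists_forall_le_of_maximal_degree_eq {d s : ℕ}
    (hpure : ∀ μ, Maximal (· ∈ Γ) μ → ∑ j, μ j = d)
    (hs : #(Γ.filter fun μ => ∑ j, μ j = s) = 1)
    (hgt : ∀ i, s < i → #(Γ.filter fun μ => ∑ j, μ j = i) = 0) :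
    ∃ π ∈ Γ, ∑ j, π j = s ∧ ∀ μ ∈ Γ, μ ≤ π := by
  obtain ⟨π, hπ⟩ := card_eq_one.1 hs
  obtain ⟨hπΓ, hπs⟩ := mem_filter.1 (hπ ▸ mem_singleton_self π)
  obtain ⟨ρ, hπρ, hρ⟩ := Γ.exists_le_maximal hπΓ
  have hsd : s ≤ d := calc
    s = ∑ j, π j := hπs.symm
    _ ≤ ∑ j, ρ j := sum_le_sum fun j _ => hπρ j
    _ = d := hpure ρ hρ
  have hds : d ≤ s := by
    by_contra! hlt
    have hempty := hgt d hlt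
    rw [card_eq_zero, filter_eq_empty_iff] at hempty
    exact hempty hρ.prop (hpure ρ hρ)
  refine ⟨π, hπΓ, hπs, fun μ hμ => ?_⟩
  obtain ⟨ν, hμν, hν⟩ := Γ.exists_le_maximal hμ
  have hνs : ν ∈ Γ.filter fun μ => ∑ j, μ j = s :=
    mem_filter.2 ⟨hν.prop, (hpure ν hν).trans (le_antisymm hds hsd)⟩
  rw [hπ, mem_singleton] at hνs
  exact hνs ▸ hμν

end Pure

variable {ι : Type*} [Fintype ι] [DecidableEq ι] {Γ : Finset (ι → ℕ)}

def vars (Γ : Finset (ι → ℕ)) : Finset ι := univ.filter fun j => Pi.single j 1 ∈ Γ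

theorem mem_vars_of_apply_ne_zero (hΓ : IsLowerSet (Γ : Set (ι → ℕ))) {μ : ι → ℕ} (hμ : μ ∈ Γ)
    {j : ι} (hj : μ j ≠ 0) : j ∈ vars Γ :=
  mem_filter.2 ⟨mem_univ j, hΓ (Pi.single_le_of_le_apply (Nat.one_le_iff_ne_zero.2 hj)) hμ⟩

theorem sum_vars_eq_sum (hΓ : IsLowerSet (Γ : Set (ι → ℕ))) {μ : ι → ℕ} (hμ : μ ∈ Γ) :
    ∑ j ∈ vars Γ, μ j = ∑ j, μ j :=
  sum_subset (subset_univ _) fun j _ hj => by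
    by_contra h
    exact hj (mem_vars_of_apply_ne_zero hΓ hμ h)

theorem filter_degree_subset_piAntidiag (hΓ : IsLowerSet (Γ : Set (ι → ℕ))) (k : ℕ) :
    Γ.filter (fun μ => ∑ j, μ j = k) ⊆ (vars Γ).piAntidiag k := by
  intro μ hμ
  obtain ⟨hμΓ, hμk⟩ := mem_filter.1 hμ
  exact mem_piAntidiag.2 ⟨(sum_vars_eq_sum hΓ hμΓ).trans hμk,
    fun j hj => mem_vars_of_apply_ne_zero hΓ hμΓ hj⟩

theorem card_filter_degree_one (hΓ : IsLowerSet (Γ : Set (ι → ℕ))) :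
    #(Γ.filter fun μ => ∑ j, μ j = 1) = #(vars Γ) := by
  refine le_antisymm ?_ ?_
  · simpa [card_piAntidiag_nat_eq_multichoose] using
      card_le_card (filter_degree_subset_piAntidiag hΓ 1)
  · rw [← card_image_of_injective _ (Pi.single_left_injective (one_ne_zero (α := ℕ)))]
    refine card_le_card fun μ hμ => ?_
    obtain ⟨j, hj, rfl⟩ := mem_image.1 hμ
    exact mem_filter.2 ⟨(mem_filter.1 hj).2, by simp⟩

theorem single_mem_of_multichoose_le (hΓ : IsLowerSet (Γ : Set (ι → ℕ))) {k : ℕ}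
    (hk : (#(vars Γ)).multichoose k ≤ #(Γ.filter fun μ => ∑ j, μ j = k)) {j : ι}
    (hj : j ∈ vars Γ) : Pi.single j k ∈ Γ := by
  -- the degree-`k` part of `Γ` consists of all monomials of degree `k` in `vars Γ`
  have hfull := eq_of_subset_of_card_le (filter_degree_subset_piAntidiag hΓ k)
    (by rwa [card_piAntidiag_nat_eq_multichoose])
  have hsingle : Pi.single j k ∈ (vars Γ).piAntidiag k := by
    refine mem_piAntidiag.2 ⟨by simp [sum_pi_single', hj], fun i hi => ?_⟩
    rcases eq_or_ne i j with rfl | hij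
    · exact hj
    · simp [hij] at hi
  rw [← hfull] at hsingle
  exact (mem_filter.1 hsingle).1

end MonomialOrderIdeal

open MonomialOrderIdeal in
theorem not_isPureOSequence_of_lt_mul {h : ℕ → ℤ} {n k s : ℕ} (h₁ : h 1 = n)
    (hk : (n.multichoose k : ℤ) ≤ h k) (hs : h s = 1) (hgt : ∀ i, s < i → h i = 0)
    (hlt : s < n * k) : ¬ IsPureOSequence h := by
  rintro ⟨N, Γ, -, hdown, ⟨d, hpure⟩, hcount⟩
  have hΓ : IsLowerSet (Γ : Set (Fin N → ℕ)) := fun μ ν hνμ hμ => hdown μ hμ ν hνμ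
  have hvars : #(vars Γ) = n := by
    have := hcount 1
    rwa [h₁, card_filter_degree_one hΓ, Nat.cast_inj] at this
  obtain ⟨π, hπΓ, hπs, hπ⟩ := exists_forall_le_of_maximal_degree_eq (s := s)
    (fun μ hμ => hpure μ hμ.prop fun ν hν hμν => le_antisymm hμν (hμ.2 hν hμν))
    (by exact_mod_cast (hcount s).trans hs)
    (fun i hi => by exact_mod_cast (hcount i).trans (hgt i hi))
  have hpow : ∀ j ∈ vars Γ, k ≤ π j := fun j hj => by
    have hfull : n.multichoose k ≤ #(Γ.filter fun μ => ∑ j, μ j = k) := by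
      exact_mod_cast hk.trans (hcount k).ge
    have hmem := single_mem_of_multichoose_le hΓ (hvars ▸ hfull) hj
    simpa using hπ _ hmem j
  have hmul := card_nsmul_le_sum _ _ _ hpow
  rw [hvars, smul_eq_mul, sum_vars_eq_sum hΓ hπΓ, hπs] at hmul
  omega

/-- The sequence `(1,3,6,10,9,7,3,1)` is not a pure O-sequence and fails Hibi's
inequalities (e.g. `h_3 = 10 > 7 = h_4`), while `(1,3,6,4,1)` satisfies Hibi's
inequalities (`h'_i ≤ h'_{s-i}` for `i ≤ s/2`) but is also not a pure O-sequence. -/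
theorem examples_not_pure :
    ∀ h h' : ℕ → ℤ,
      (h = fun i => if i = 0 then 1 else if i = 1 then 3 else if i = 2 then 6
        else if i = 3 then 10 else if i = 4 then 9 else if i = 5 then 7
        else if i = 6 then 3 else if i = 7 then 1 else 0) →
      (h' = fun i => if i = 0 then 1 else if i = 1 then 3 else if i = 2 then 6
        else if i = 3 then 4 else if i = 4 then 1 else 0) →
      (¬ IsPureOSequence h) ∧ (∃ i ≤ 3, h (7 - i) < h i) ∧
        (∀ i ≤ 2, h' i ≤ h' (4 - i)) ∧ ¬ IsPureOSequence h' := by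
  rintro h h' rfl rfl
  refine ⟨?_, ⟨3, by norm_num, by norm_num⟩, fun i hi => by interval_cases i <;> norm_num, ?_⟩
  · refine not_isPureOSequence_of_lt_mul (n := 3) (k := 3) (s := 7) rfl ?_ rfl
      (fun i hi => by split_ifs <;> omega) (by norm_num)
    simp [Nat.multichoose_eq, Nat.choose]
  · refine not_isPureOSequence_of_lt_mul (n := 3) (k := 2) (s := 4) rfl ?_ rfl
      (fun i hi => by split_ifs <;> omega) (by norm_num)
    simp [Nat.multichoose_eq, Nat.choose]
end

section
/- Let Δ be a matroid on vertex set V, v ∈ V a vertex that is not a cone point (i.e., some facet omits v), and let J(Δ) = ⋂_{F facet of Δ} (x_i : i ∈ F) be the cover ideal in k[x_i : i ∈ V]. Then the h-vectors satisfy h^Δ_i = h^{Δ\v}_{i-1} + h^{link_Δ(v)}_i for all i, where h^Δ denotes the h-vector of S/J(Δ). -/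
open scoped Classical

/-- The Hilbert function of the graded quotient `S/I`, `S = k[x_v : v ∈ V]`:
the `k`-dimension of the image of the degree-`j` homogeneous component in `S/I`. -/
noncomputable def gradedHF (k : Type*) [Field k] {V : Type*} [Fintype V]
    (I : Ideal (MvPolynomial V k)) (j : ℕ) : ℕ :=
  Module.finrank k ((MvPolynomial.homogeneousSubmodule V k j).map
    (Ideal.Quotient.mkₐ k I).toLinearMap)

/-- The h-vector of `S/I` (of Krull dimension `d`): the `i`-th coefficient of the
numerator of the Hilbert series written with denominator `(1-z)^d`, i.e. of
`HS_{S/I}(z)·(1-z)^d`. -/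
noncomputable def hVec (k : Type*) [Field k] {V : Type*} [Fintype V]
    (I : Ideal (MvPolynomial V k)) (d i : ℕ) : ℤ :=
  PowerSeries.coeff (R := ℤ) i
    ((PowerSeries.mk fun j => (gradedHF k I j : ℤ)) * (1 - PowerSeries.X) ^ d)

/-- The facets (maximal faces) of the simplicial complex whose faces are the `F` with
`P F`. -/
noncomputable def facets {V : Type*} [Fintype V] (P : Finset V → Prop) :
    Finset (Finset V) :=
  Finset.univ.filter fun B => P B ∧ ∀ F : Finset V, P F → B ⊆ F → B = F

/-- The cover ideal `J(Δ) = ⋂_{F facet} (x_i : i ∈ F)` of a complex with facet set `Fs`. -/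
noncomputable def coverIdeal (k : Type*) [Field k] {V : Type*} [Fintype V]
    (Fs : Finset (Finset V)) : Ideal (MvPolynomial V k) :=
  ⨅ B ∈ Fs, Ideal.span ((fun v => (MvPolynomial.X v : MvPolynomial V k)) '' (B : Set V))

/-!
The cover ideal `J(Δ)` is a squarefree monomial ideal, and `x^m ∉ J(Δ)` iff `m` vanishes on some
facet of `Δ`; so the Hilbert function of `S/J(Δ)` in degree `j` counts the degree-`j` exponents
vanishing on a facet. Split them by whether `m v = 0`. If `m v ≠ 0`, the facet avoids `v`; by
basis exchange (`v` is not a cone point) the facets of `Δ` avoiding `v` are the facets of `Δ \ v`,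
and dividing by `x_v` matches these exponents with the degree-`(j-1)` ones for `Δ \ v`. If
`m v = 0`, then `m` vanishes on a facet of `Δ` iff it vanishes on a facet of `link_Δ(v)`, again
by exchange. Applying the same split to the link, all of whose facets avoid `v`, gives
`HS_Δ = z·HS_{Δ\v} + (1-z)·HS_{link}`, and multiplying by `(1-z)^(|V|-r)` gives the recursion.
-/

open Finset MvPolynomial

namespace CoverIdeal

variable {k : Type*} [Field k] {V : Type*} [Fintype V]

def IsStandard (Fs : Finset (Finset V)) (m : V →₀ ℕ) : Prop :=
  ∃ B ∈ Fs, ∀ i ∈ B, m i = 0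

noncomputable def standardMonomials (Fs : Finset (Finset V)) (j : ℕ) : Finset (V →₀ ℕ) :=
  (univ.finsuppAntidiag j).filter (IsStandard Fs)

lemma mem_standardMonomials {Fs : Finset (Finset V)} {j : ℕ} {m : V →₀ ℕ} :
    m ∈ standardMonomials Fs j ↔ m.degree = j ∧ IsStandard Fs m := by
  simp [standardMonomials, Finsupp.degree_eq_sum]

lemma mem_coverIdeal_iff {Fs : Finset (Finset V)} {p : MvPolynomial V k} :
    p ∈ coverIdeal k Fs ↔ ∀ m ∈ p.support, ¬ IsStandard Fs m := by
  simp only [coverIdeal, Ideal.mem_iInf, mem_ideal_span_X_image, IsStandard]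
  push Not
  exact forall₂_comm

lemma monomial_mem_coverIdeal {Fs : Finset (Finset V)} {m : V →₀ ℕ} (hm : ¬ IsStandard Fs m)
    (c : k) : monomial m c ∈ coverIdeal k Fs :=
  mem_coverIdeal_iff.2 fun m' hm' => by rwa [mem_singleton.1 (support_monomial_subset hm')]

lemma restrictSupport_standardMonomials_le (Fs : Finset (Finset V)) (j : ℕ) :
    restrictSupport k (standardMonomials Fs j : Set (V →₀ ℕ)) ≤ homogeneousSubmodule V k j := by
  rw [homogeneousSubmodule_eq_finsupp_supported]
  exact restrictSupport_mono k fun m hm => (mem_standardMonomials.1 hm).1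

lemma map_homogeneousSubmodule_coverIdeal (Fs : Finset (Finset V)) (j : ℕ) :
    (homogeneousSubmodule V k j).map (Ideal.Quotient.mkₐ k (coverIdeal k Fs)).toLinearMap =
      (restrictSupport k (standardMonomials Fs j : Set (V →₀ ℕ))).map
        (Ideal.Quotient.mkₐ k (coverIdeal k Fs)).toLinearMap := by
  refine le_antisymm ?_ (Submodule.map_mono (restrictSupport_standardMonomials_le Fs j))
  rw [Submodule.map_le_iff_le_comap, homogeneousSubmodule_eq_finsupp_supported,
    ← restrictSupport, restrictSupport_eq_span, Submodule.span_le]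
  rintro _ ⟨m, hdeg, rfl⟩
  by_cases hm : IsStandard Fs m
  · exact Submodule.mem_map_of_mem <| (monomial_mem_restrictSupport k).2 <|
      .inl (mem_standardMonomials.2 ⟨hdeg, hm⟩)
  · rw [SetLike.mem_coe, Submodule.mem_comap, AlgHom.toLinearMap_apply, Ideal.Quotient.mkₐ_eq_mk,
      Ideal.Quotient.eq_zero_iff_mem.2 (monomial_mem_coverIdeal hm 1)]
    exact zero_mem _

lemma disjoint_restrictSupport_ker (Fs : Finset (Finset V)) (j : ℕ) :
    Disjoint (restrictSupport k (standardMonomials Fs j : Set (V →₀ ℕ)))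
      (LinearMap.ker (Ideal.Quotient.mkₐ k (coverIdeal k Fs)).toLinearMap) := by
  rw [Submodule.disjoint_def]
  intro p hp hpJ
  rw [LinearMap.mem_ker, AlgHom.toLinearMap_apply, Ideal.Quotient.mkₐ_eq_mk,
    Ideal.Quotient.eq_zero_iff_mem, mem_coverIdeal_iff] at hpJ
  rw [← support_eq_empty, eq_empty_iff_forall_notMem]
  exact fun m hm => hpJ m hm (mem_standardMonomials.1 (hp hm)).2

theorem gradedHF_coverIdeal (Fs : Finset (Finset V)) (j : ℕ) :
    gradedHF k (coverIdeal k Fs) j = #(standardMonomials Fs j) := by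
  rw [gradedHF, map_homogeneousSubmodule_coverIdeal, ← LinearMap.range_domRestrict,
    LinearMap.finrank_range_of_inj
      (LinearMap.injective_domRestrict_iff.2 (disjoint_restrictSupport_ker Fs j)),
    Module.finrank_eq_card_basis (basisRestrictSupport k _)]
  simp

noncomputable def standardSeries (Fs : Finset (Finset V)) : PowerSeries ℤ :=
  PowerSeries.mk fun j => (#(standardMonomials Fs j) : ℤ)

lemma hVec_coverIdeal (Fs : Finset (Finset V)) (d i : ℕ) :
    hVec k (coverIdeal k Fs) d i =
      PowerSeries.coeff i (standardSeries Fs * (1 - PowerSeries.X) ^ d) := by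
  simp only [hVec, gradedHF_coverIdeal, standardSeries]

lemma filter_standardMonomials_congr {Fs Gs : Finset (Finset V)} {v : V}
    (h : ∀ m : V →₀ ℕ, m v = 0 → (IsStandard Fs m ↔ IsStandard Gs m)) (j : ℕ) :
    {m ∈ standardMonomials Fs j | m v = 0} = {m ∈ standardMonomials Gs j | m v = 0} := by
  ext m
  simp only [mem_filter, mem_standardMonomials]
  exact ⟨fun ⟨⟨hd, hm⟩, hv⟩ => ⟨⟨hd, (h m hv).1 hm⟩, hv⟩,
    fun ⟨⟨hd, hm⟩, hv⟩ => ⟨⟨hd, (h m hv).2 hm⟩, hv⟩⟩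

variable [DecidableEq V]

lemma card_standardMonomials_succ_filter_ne_zero (Fs : Finset (Finset V)) (v : V) (j : ℕ) :
    #{m ∈ standardMonomials Fs (j + 1) | m v ≠ 0} =
      #(standardMonomials (Fs.filter (v ∉ ·)) j) := by
  symm
  apply card_nbij' (· + Finsupp.single v 1) (· - Finsupp.single v 1)
  · intro m hm
    obtain ⟨hdeg, B, hB, hmB⟩ := mem_standardMonomials.1 hm
    obtain ⟨hB, hvB⟩ := mem_filter.1 hB
    refine mem_filter.2 ⟨mem_standardMonomials.2 ⟨by simp [hdeg], B, hB, fun i hi => ?_⟩, by simp⟩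
    simp [hmB i hi, show v ≠ i from fun h => hvB (h ▸ hi)]
  · intro m hm
    dsimp only
    obtain ⟨hm, hmv⟩ := mem_filter.1 hm
    obtain ⟨hdeg, B, hB, hmB⟩ := mem_standardMonomials.1 hm
    have hvB : v ∉ B := fun h => hmv (hmB v h)
    have hle : Finsupp.single v 1 ≤ m := Finsupp.single_le_iff.2 (Nat.one_le_iff_ne_zero.2 hmv)
    refine mem_standardMonomials.2 ⟨?_, B, mem_filter.2 ⟨hB, hvB⟩, fun i hi => ?_⟩
    · have := congrArg Finsupp.degree (tsub_add_cancel_of_le hle)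
      simp only [map_add, Finsupp.degree_single, hdeg] at this
      omega
    · simp [hmB i hi]
  · intro m _
    exact add_tsub_cancel_right m _
  · intro m hm
    exact tsub_add_cancel_of_le <| Finsupp.single_le_iff.2 <|
      Nat.one_le_iff_ne_zero.2 (mem_filter.1 hm).2

lemma standardSeries_eq_add (Fs : Finset (Finset V)) (v : V) :
    standardSeries Fs =
      PowerSeries.mk (fun j => (#{m ∈ standardMonomials Fs j | m v = 0} : ℤ)) +
        PowerSeries.X * standardSeries (Fs.filter (v ∉ ·)) := by
  ext (_ | j)
  · suffices ∀ m ∈ standardMonomials Fs 0, m v = 0 by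
      simp [standardSeries, filter_true_of_mem this]
    intro m hm
    simp [(Finsupp.degree_eq_zero_iff m).1 (mem_standardMonomials.1 hm).1]
  · rw [map_add, PowerSeries.coeff_succ_X_mul, standardSeries, standardSeries,
      PowerSeries.coeff_mk, PowerSeries.coeff_mk, PowerSeries.coeff_mk,
      ← card_standardMonomials_succ_filter_ne_zero, ← Nat.cast_add,
      card_filter_add_card_filter_not]

end CoverIdeal

open CoverIdeal

section Facets

variable {V : Type*} [Fintype V]

lemma mem_facets {P : Finset V → Prop} {B : Finset V} : B ∈ facets P ↔ Maximal P B := by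
  simp [facets, maximal_iff]

lemma exists_facet_superset {P : Finset V → Prop} {F : Finset V} (hF : P F) :
    ∃ B ∈ facets P, F ⊆ B := by
  obtain ⟨B, hFB, hB⟩ := Finite.exists_le_maximal hF
  exact ⟨B, mem_facets.2 hB, hFB⟩

variable [DecidableEq V]

lemma facets_filter_eq_self {P : Finset V → Prop} {v : V} (hP : ∀ F, P F → v ∉ F) :
    (facets P).filter (v ∉ ·) = facets P :=
  filter_true_of_mem fun _ hB => hP _ (mem_facets.1 hB).prop

variable {Indep : Finset V → Prop}
  (hexch : ∀ F G : Finset V, Indep F → Indep G → G.card < F.card →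
    ∃ u ∈ F, u ∉ G ∧ Indep (insert u G))
  {r : ℕ} (hrank : ∀ B ∈ facets Indep, B.card = r)

include hexch hrank in
lemma mem_facets_of_not_indep_insert {C B₀ : Finset V} (hC : Indep C) (hB₀ : B₀ ∈ facets Indep)
    (h : ∀ u ∈ B₀, u ∉ C → ¬ Indep (insert u C)) : C ∈ facets Indep := by
  obtain ⟨B, hB, hCB⟩ := exists_facet_superset hC
  suffices C = B from this ▸ hB
  refine eq_of_subset_of_card_le hCB (not_lt.1 fun hlt => ?_)
  rw [hrank B hB, ← hrank B₀ hB₀] at hlt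
  obtain ⟨u, hu, huC, hind⟩ := hexch B₀ C (mem_facets.1 hB₀).prop hC hlt
  exact h u hu huC hind

include hexch hrank in
lemma exists_facet_between {G X B : Finset V} (hG : Indep G) (hGX : G ⊆ X)
    (hB : B ∈ facets Indep) (hBX : B ⊆ X) : ∃ C ∈ facets Indep, G ⊆ C ∧ C ⊆ X := by
  obtain ⟨C, hGC, hC⟩ := Finite.exists_le_maximal (p := fun C => Indep C ∧ C ⊆ X) ⟨hG, hGX⟩
  refine ⟨C, mem_facets_of_not_indep_insert hexch hrank hC.prop.1 hB fun u hu huC hind => ?_,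
    hGC, hC.prop.2⟩
  exact hC.not_prop_of_gt (ssubset_insert huC) ⟨hind, insert_subset (hBX hu) hC.prop.2⟩

include hexch hrank in
lemma facets_deletion {v : V} (hnotcone : ∃ B ∈ facets Indep, v ∉ B) :
    facets (fun F => v ∉ F ∧ Indep F) = (facets Indep).filter (v ∉ ·) := by
  obtain ⟨B₀, hB₀, hvB₀⟩ := hnotcone
  ext B
  simp only [mem_filter, mem_facets]
  refine ⟨fun hB => ⟨mem_facets.1 ?_, hB.prop.1⟩,
    fun ⟨hB, hvB⟩ => hB.mono (fun _ h => h.2) ⟨hvB, hB.prop⟩⟩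
  refine mem_facets_of_not_indep_insert hexch hrank hB.prop.2 hB₀ fun u hu huB hind => ?_
  have huv : u ≠ v := fun h => hvB₀ (h ▸ hu)
  exact hB.not_prop_of_gt (ssubset_insert huB) ⟨by simp [huv.symm, hB.prop.1], hind⟩

include hexch hrank in
lemma mem_facets_link_iff {v : V} (hnotcone : ∃ B ∈ facets Indep, v ∉ B) {F : Finset V} :
    F ∈ facets (fun F => v ∉ F ∧ Indep (insert v F)) ↔ v ∉ F ∧ insert v F ∈ facets Indep := by
  obtain ⟨B₀, hB₀, hvB₀⟩ := hnotcone
  rw [mem_facets, mem_facets]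
  constructor
  · intro hF
    refine ⟨hF.prop.1, mem_facets.1 <| mem_facets_of_not_indep_insert hexch hrank hF.prop.2 hB₀
      fun u hu huF hind => ?_⟩
    have huv : u ≠ v := fun h => hvB₀ (h ▸ hu)
    refine hF.not_prop_of_gt (ssubset_insert (fun h => huF (mem_insert_of_mem h)))
      ⟨by simp [huv.symm, hF.prop.1], ?_⟩
    rwa [insert_comm]
  · rintro ⟨hvF, hF⟩
    refine ⟨⟨hvF, hF.prop⟩, fun G hG hFG x hx => ?_⟩
    have hx' := hF.2 hG.2 (insert_subset_insert v hFG) (mem_insert_of_mem hx)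
    exact (mem_insert.1 hx').resolve_left fun h => hG.1 (h ▸ hx)

include hexch hrank in
lemma isStandard_facets_iff_link {v : V} (hvert : Indep {v})
    (hnotcone : ∃ B ∈ facets Indep, v ∉ B) {m : V →₀ ℕ} (hmv : m v = 0) :
    IsStandard (facets Indep) m ↔
      IsStandard (facets fun F => v ∉ F ∧ Indep (insert v F)) m := by
  constructor
  · rintro ⟨B, hB, hmB⟩
    -- a facet `C` with `v ∈ C ⊆ insert v B`; then `m` vanishes on the link facet `C.erase v`
    obtain ⟨C, hC, hvC, hCB⟩ := exists_facet_between hexch hrank hvert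
      (singleton_subset_iff.2 (mem_insert_self v B)) hB (subset_insert v B)
    refine ⟨C.erase v, ?_, fun i hi => ?_⟩
    · rw [mem_facets_link_iff hexch hrank hnotcone, insert_erase (singleton_subset_iff.1 hvC)]
      exact ⟨notMem_erase v C, hC⟩
    · rcases mem_insert.1 (hCB (mem_of_mem_erase hi)) with rfl | hiB
      exacts [hmv, hmB i hiB]
  · rintro ⟨F, hF, hmF⟩
    refine ⟨insert v F, ((mem_facets_link_iff hexch hrank hnotcone).1 hF).2, fun i hi => ?_⟩
    rcases mem_insert.1 hi with rfl | hiF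
    exacts [hmv, hmF i hiF]

include hexch hrank in
lemma standardSeries_facets_eq {v : V} (hvert : Indep {v})
    (hnotcone : ∃ B ∈ facets Indep, v ∉ B) :
    standardSeries (facets Indep) =
      PowerSeries.X * standardSeries (facets fun F => v ∉ F ∧ Indep F) +
        (1 - PowerSeries.X) *
          standardSeries (facets fun F => v ∉ F ∧ Indep (insert v F)) := by
  have hlink := standardSeries_eq_add (facets fun F => v ∉ F ∧ Indep (insert v F)) v
  rw [facets_filter_eq_self fun F hF => hF.1] at hlink
  rw [standardSeries_eq_add (facets Indep) v, ← facets_deletion hexch hrank hnotcone]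
  simp only [filter_standardMonomials_congr
    (fun _ hmv => isStandard_facets_iff_link hexch hrank hvert hnotcone hmv)]
  linear_combination -hlink

end Facets

theorem hvec_matroid_recursion_general (k : Type*) [Field k] (V : Type*) [Fintype V]
    [DecidableEq V] (Indep : Finset V → Prop)
    (hexch : ∀ F G : Finset V, Indep F → Indep G → G.card < F.card →
      ∃ u ∈ F, u ∉ G ∧ Indep (insert u G))
    (hvert : ∀ u : V, Indep {u})
    (r : ℕ) (hrank : ∀ B ∈ facets Indep, B.card = r)
    (v : V) (hnotcone : ∃ B ∈ facets Indep, v ∉ B) :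
    ∀ i : ℕ,
      hVec k (coverIdeal k (facets Indep)) (Fintype.card V - r) i =
        (if i = 0 then 0 else
          hVec k (coverIdeal k (facets fun F => v ∉ F ∧ Indep F))
            (Fintype.card V - r) (i - 1)) +
          hVec k (coverIdeal k (facets fun F => v ∉ F ∧ Indep (insert v F)))
            (Fintype.card V - (r - 1)) i := by
  intro i
  have hdim : Fintype.card V - (r - 1) = Fintype.card V - r + 1 := by
    obtain ⟨B₀, hB₀, -⟩ := hnotcone
    obtain ⟨B, hB, hvB⟩ := exists_facet_superset (hvert v)
    have h1 : 1 ≤ r := hrank B hB ▸ card_pos.2 ⟨v, singleton_subset_iff.1 hvB⟩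
    have h2 : r ≤ Fintype.card V := hrank B₀ hB₀ ▸ card_le_univ B₀
    omega
  have hseries : standardSeries (facets Indep) * (1 - PowerSeries.X) ^ (Fintype.card V - r) =
      PowerSeries.X * (standardSeries (facets fun F => v ∉ F ∧ Indep F) *
        (1 - PowerSeries.X) ^ (Fintype.card V - r)) +
      standardSeries (facets fun F => v ∉ F ∧ Indep (insert v F)) *
        (1 - PowerSeries.X) ^ (Fintype.card V - r + 1) := by
    rw [standardSeries_facets_eq hexch hrank (hvert v) hnotcone]
    ring
  simp only [hVec_coverIdeal, hdim, hseries, map_add]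
  cases i <;> simp [PowerSeries.coeff_succ_X_mul]

/-- Let `Δ` be a matroid on the vertex set `V` (given by its faces/independent sets, all of
whose facets have cardinality `r`, every vertex being a vertex of `Δ`), and let `v` be a
vertex which is not a cone point. Then the h-vectors of the cover ideals (the quotient
`S/J(Δ)` having Krull dimension `|V| - r`, and similarly for the deletion `Δ \ v` and the
link `link_Δ(v)`, of ranks `r` and `r-1`) satisfy
`h^Δ_i = h^{Δ\v}_{i-1} + h^{link_Δ(v)}_i` for all `i`. -/
theorem hvec_matroid_recursion (k : Type*) [Field k] (V : Type*) [Fintype V]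
    [DecidableEq V] (Indep : Finset V → Prop)
    (hempty : Indep ∅)
    (hdown : ∀ F G : Finset V, G ⊆ F → Indep F → Indep G)
    (hexch : ∀ F G : Finset V, Indep F → Indep G → G.card < F.card →
      ∃ u ∈ F, u ∉ G ∧ Indep (insert u G))
    (hvert : ∀ u : V, Indep {u})
    (r : ℕ) (hrank : ∀ B ∈ facets Indep, B.card = r)
    (v : V) (hnotcone : ∃ B ∈ facets Indep, v ∉ B) :
    ∀ i : ℕ,
      hVec k (coverIdeal k (facets Indep)) (Fintype.card V - r) i =
        (if i = 0 then 0 else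
          hVec k (coverIdeal k (facets fun F => v ∉ F ∧ Indep F))
            (Fintype.card V - r) (i - 1)) +
          hVec k (coverIdeal k (facets fun F => v ∉ F ∧ Indep (insert v F)))
            (Fintype.card V - (r - 1)) i :=
  hvec_matroid_recursion_general k V Indep hexch hvert r hrank v hnotcone
end
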